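/- arXiv:1311.4039 — 3 statements merged into one kernel-verified Lean document; each statement's English description precedes it below -/
import Mathlib

section
/- Let Ω*_Q be rational algebraic cobordism and A an abelian variety of dimension g with Fourier–Mukai operator F^Ω satisfying: F̂^Ω ∘ F^Ω = (-1)^g σ*; F^Ω(m_* x) = m̂* F^Ω(x) for isogenies; and for x ∈ Ω^p_Q(A), writing F^Ω(x) = Σ_q y_q with y_q ∈ Ω^q_Q(Â), one has n* y_q = n^{g-p+q} y_q. Then for x ∈ Ω^p_Q(A) and an integer m with |m| ≥ 2, the following are equivalent: (i) F^Ω(x) ∈ Ω^{g-p+s}_Q(Â); (ii) n* x = n^{2p-s} x for all n; (iii) m* x = m^{2p-s} x; (iv) m_* x = m^{2g-2p+s} x. -/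
open Finset

section Aux

variable {V : Type*} [AddCommGroup V] [Module ℚ V]

/-- In an internal direct sum, a finitely supported family of homogeneous elements
summing to zero is identically zero. -/
lemma aux_eq_zero_of_finsum_eq_zero {Om : ℤ → Submodule ℚ V}
    (hint : DirectSum.IsInternal Om) {y : ℤ → V}
    (hfin : (Function.support y).Finite) (hmem : ∀ q, y q ∈ Om q)
    (hsum : finsum y = 0) : ∀ q, y q = 0 := by
  classical
  have hind := hint.submodule_iSupIndep
  intro q
  by_cases hq : y q = 0
  · exact hq
  · have hqmem : q ∈ hfin.toFinset := hfin.mem_toFinset.2 hq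
    have hsum' : ∑ i ∈ hfin.toFinset, y i = 0 := by
      rw [← finsum_eq_sum y hfin]; exact hsum
    have h1 : y q = -∑ i ∈ hfin.toFinset.erase q, y i := by
      rw [eq_neg_iff_add_eq_zero, ← hsum']
      exact Finset.add_sum_erase _ y hqmem
    have hmem2 : y q ∈ ⨆ j, ⨆ _ : j ≠ q, Om j := by
      rw [h1]
      exact neg_mem (Submodule.sum_mem _ (fun j hj =>
        Submodule.mem_iSup_of_mem j
          (Submodule.mem_iSup_of_mem (Finset.ne_of_mem_erase hj) (hmem j))))
    exact Submodule.disjoint_def.mp (hind q) (y q) (hmem q) hmem2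

/-- Uniqueness of decompositions: if a finitely supported homogeneous family sums to an
element of `Om t`, then all components away from `t` vanish and the `t`-component is
the whole sum. -/
lemma aux_component_eq {Om : ℤ → Submodule ℚ V}
    (hint : DirectSum.IsInternal Om) {y : ℤ → V}
    (hfin : (Function.support y).Finite) (hmem : ∀ q, y q ∈ Om q)
    {v : V} {t : ℤ} (hv : v ∈ Om t) (hsum : finsum y = v) :
    y t = v ∧ ∀ q, q ≠ t → y q = 0 := by
  classical
  set w : ℤ → V := fun q => y q - if q = t then v else 0 with hw
  have hwfin : (Function.support w).Finite := by
    apply Set.Finite.subset (hfin.union (Set.finite_singleton t))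
    intro q hq
    by_cases hqt : q = t
    · exact Or.inr hqt
    · left
      simp only [hw, Function.mem_support, if_neg hqt, sub_zero] at hq
      exact hq
  have hwmem : ∀ q, w q ∈ Om q := by
    intro q
    by_cases hqt : q = t
    · have hwq : w q = y q - v := by simp [hw, if_pos hqt]
      rw [hwq]
      exact sub_mem (hmem q) (by rw [hqt]; exact hv)
    · simpa [hw, if_neg hqt] using hmem q
  have hifin : (Function.support (fun q => if q = t then v else 0)).Finite := by
    apply Set.Finite.subset (Set.finite_singleton t)
    intro q hq
    by_cases hqt : q = t
    · exact hqt
    · simp [if_neg hqt] at hq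
  have hisum : finsum (fun q => if q = t then v else 0) = v := by
    rw [finsum_eq_single _ t (fun q hq => by simp [if_neg hq])]
    simp
  have hwsum : finsum w = 0 := by
    simp only [hw]
    rw [finsum_sub_distrib hfin hifin, hsum, hisum, sub_self]
  have hz := aux_eq_zero_of_finsum_eq_zero hint hwfin hwmem hwsum
  constructor
  · have h := hz t
    simp only [hw, if_pos rfl] at h
    exact sub_eq_zero.mp h
  · intro q hq
    have h := hz q
    simpa [hw, if_neg hq] using h

/-- zpow injectivity for an integer of absolute value at least 2, cast into `ℚ`. -/
lemma aux_zpow_inj {m : ℤ} (hm : 2 ≤ |m|) {a b : ℤ}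
    (h : (m : ℚ) ^ a = (m : ℚ) ^ b) : a = b := by
  have habs : ∀ a : ℤ, |(m : ℚ) ^ a| = |(m : ℚ)| ^ a := by
    intro a
    rcases a with n | n
    · simpa using abs_pow (m : ℚ) n
    · rw [zpow_negSucc, zpow_negSucc, abs_inv, abs_pow]
  have h2 : (2 : ℚ) ≤ |(m : ℚ)| := by
    rw [← Int.cast_abs]
    exact_mod_cast hm
  have h0 : (0 : ℚ) < |(m : ℚ)| := lt_of_lt_of_le (by norm_num) h2
  have h1 : |(m : ℚ)| ≠ 1 := by intro h1; rw [h1] at h2; norm_num at h2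
  have habs' : |(m : ℚ)| ^ a = |(m : ℚ)| ^ b := by
    rw [← habs, ← habs, h]
  exact zpow_right_injective₀ h0 h1 habs'

end Aux

/-- **Characterization of the Beauville eigenspaces in algebraic cobordism.**
`VA`, `VB` model `Ω^*_ℚ(A)` and `Ω^*_ℚ(Â)` for an abelian variety `A` of
dimension `g`, with codimension gradings `OmA`, `OmB` (internal direct sums),
pullbacks `pullA n` and pushforwards `pushA n` by multiplication by `n`,
Fourier–Mukai transforms `F`, `Fhat`, and the hypotheses of the paper:
`F̂∘F = (-1)^g σ^*`; exchange of pullback and pushforward under `F`, `F̂`;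
`m_* m^* = m^{2g}`; multiplicativity of pullbacks; and the spectral property:
for `x ∈ Ω^p`, writing `F x = Σ_q y_q` with `y_q ∈ Ω^q`, one has
`n^* y_q = n^{g-p+q} y_q`.  Then for `x ∈ Ω^p_ℚ(A)` and `|m| ≥ 2`, TFAE:
(i) `F x ∈ Ω^{g-p+s}_ℚ(Â)`; (ii) `n^* x = n^{2p-s} x` for all `n`;
(iii) `m^* x = m^{2p-s} x`; (iv) `m_* x = m^{2g-2p+s} x`. -/
theorem beauville_eigenspace_tfae
    {VA VB : Type*} [AddCommGroup VA] [Module ℚ VA] [AddCommGroup VB] [Module ℚ VB]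
    (g : ℕ)
    (OmA : ℤ → Submodule ℚ VA) (OmB : ℤ → Submodule ℚ VB)
    (hintA : DirectSum.IsInternal OmA) (hintB : DirectSum.IsInternal OmB)
    (pullA pushA : ℤ → Module.End ℚ VA) (pullB pushB : ℤ → Module.End ℚ VB)
    (F : VA →ₗ[ℚ] VB) (Fhat : VB →ₗ[ℚ] VA)
    -- F̂ ∘ F = (-1)^g σ^*  and  F ∘ F̂ = (-1)^g σ^*
    (hFF : ∀ x, Fhat (F x) = ((-1 : ℚ)) ^ g • pullA (-1) x)
    (hFFhat : ∀ y, F (Fhat y) = ((-1 : ℚ)) ^ g • pullB (-1) y)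
    -- exchange of pushforward and pullback under F and F̂
    (hFpush : ∀ (m : ℤ) (x : VA), F (pushA m x) = pullB m (F x))
    (hFpull : ∀ (m : ℤ) (x : VA), F (pullA m x) = pushB m (F x))
    (hFhatpush : ∀ (m : ℤ) (y : VB), Fhat (pushB m y) = pullA m (Fhat y))
    (hFhatpull : ∀ (m : ℤ) (y : VB), Fhat (pullB m y) = pushA m (Fhat y))
    -- multiplicativity of pullbacks, and m_* m^* = m^{2g}
    (hmulA : ∀ (n m : ℤ) (x : VA), pullA n (pullA m x) = pullA (n * m) x)
    (hmulB : ∀ (n m : ℤ) (y : VB), pullB n (pullB m y) = pullB (n * m) y)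
    (hgradeA : ∀ (q : ℤ) (x : VA), x ∈ OmA q → pullA (-1) x ∈ OmA q)
    (hgradeB : ∀ (q : ℤ) (y : VB), y ∈ OmB q → pullB (-1) y ∈ OmB q)
    (hdegA : ∀ (m : ℤ) (x : VA), m ≠ 0 →
      pushA m (pullA m x) = ((m : ℚ) ^ (2 * g)) • x)
    -- spectral property of F and F̂
    (hspecF : ∀ (p : ℤ) (x : VA), x ∈ OmA p → ∃ y : ℤ → VB,
      (Function.support y).Finite ∧ (∀ q, y q ∈ OmB q) ∧ F x = finsum y ∧
      ∀ (n q : ℤ), pullB n (y q) = ((n : ℚ) ^ ((g : ℤ) - p + q)) • y q)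
    (hspecFhat : ∀ (p : ℤ) (y : VB), y ∈ OmB p → ∃ x : ℤ → VA,
      (Function.support x).Finite ∧ (∀ q, x q ∈ OmA q) ∧ Fhat y = finsum x ∧
      ∀ (n q : ℤ), pullA n (x q) = ((n : ℚ) ^ ((g : ℤ) - p + q)) • x q)
    (p s : ℤ) (x : VA) (hx : x ∈ OmA p) (m : ℤ) (hm : 2 ≤ |m|) :
    List.TFAE
      [F x ∈ OmB ((g : ℤ) - p + s),
       ∀ n : ℤ, pullA n x = ((n : ℚ) ^ (2 * p - s)) • x,
       pullA m x = ((m : ℚ) ^ (2 * p - s)) • x,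
       pushA m x = ((m : ℚ) ^ (2 * (g : ℤ) - 2 * p + s)) • x] := by
  have hm0 : m ≠ 0 := by
    intro h; rw [h] at hm; norm_num at hm
  have hmq0 : (m : ℚ) ≠ 0 := Int.cast_ne_zero.mpr hm0
  -- pullA 1 = id
  have hpush1 : ∀ z : VA, pushA 1 (pullA 1 z) = z := by
    intro z
    have := hdegA 1 z one_ne_zero
    simpa using this
  have hpull1 : ∀ z : VA, pullA 1 z = z := by
    intro z
    have h2 : pullA 1 (pullA 1 z) = pullA 1 z := by
      rw [hmulA]; norm_num
    calc pullA 1 z = pushA 1 (pullA 1 (pullA 1 z)) := (hpush1 _).symm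
      _ = pushA 1 (pullA 1 z) := by rw [h2]
      _ = z := hpush1 z
  tfae_have 1 → 2 := by
    intro h1 n
    obtain ⟨z, hzfin, hzmem, hzFhat, hzspec⟩ := hspecFhat ((g : ℤ) - p + s) (F x) h1
    have hu : ((-1 : ℚ)) ^ g • pullA (-1) x ∈ OmA p :=
      Submodule.smul_mem _ _ (hgradeA p x hx)
    have hcomp := aux_component_eq hintA hzfin hzmem hu
      (by rw [← hzFhat]; exact hFF x)
    have hzp : z p = ((-1 : ℚ)) ^ g • pullA (-1) x := hcomp.1
    have hsp := hzspec n p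
    rw [hzp] at hsp
    have hexp : (g : ℤ) - ((g : ℤ) - p + s) + p = 2 * p - s := by ring
    rw [hexp] at hsp
    rw [map_smul] at hsp
    rw [smul_comm ((n : ℚ) ^ (2 * p - s)) (((-1 : ℚ)) ^ g)] at hsp
    have hne : ((-1 : ℚ)) ^ g ≠ 0 := by
      apply pow_ne_zero; norm_num
    have hsp' : pullA n (pullA (-1) x) = ((n : ℚ) ^ (2 * p - s)) • pullA (-1) x :=
      smul_right_injective VA hne (by simpa using hsp)
    have e0 : pullA (n * -1) x = ((n : ℚ) ^ (2 * p - s)) • pullA (-1) x := by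
      rw [← hmulA]; exact hsp'
    have e1 := congrArg (pullA (-1)) e0
    rw [hmulA, map_smul, hmulA] at e1
    have r1 : (-1 : ℤ) * (n * -1) = n := by ring
    have r2 : (-1 : ℤ) * -1 = 1 := by ring
    rw [r1, r2, hpull1] at e1
    exact e1
  tfae_have 2 → 3 := fun h => h m
  tfae_have 3 → 4 := by
    intro h3
    have hcongr := congrArg (pushA m) h3
    rw [hdegA m x hm0, map_smul] at hcongr
    -- hcongr : m^(2g) • x = m^(2p-s) • pushA m x
    have hps : pushA m x = (((m : ℚ) ^ (2 * p - s))⁻¹ * (m : ℚ) ^ (2 * g)) • x := by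
      rw [mul_smul, hcongr, smul_smul,
        inv_mul_cancel₀ (zpow_ne_zero _ hmq0), one_smul]
    rw [hps]
    congr 1
    rw [← zpow_natCast (m : ℚ) (2 * g), ← zpow_neg, ← zpow_add₀ hmq0]
    congr 1
    push_cast
    ring
  tfae_have 4 → 1 := by
    intro h4
    obtain ⟨y, hyfin, hymem, hyF, hyspec⟩ := hspecF p x hx
    set c : ℤ := 2 * (g : ℤ) - 2 * p + s with hc
    have h1 : pullB m (F x) = ((m : ℚ) ^ c) • F x := by
      rw [← hFpush, h4, map_smul]
    have hlhs : pullB m (F x) = finsum (fun q => ((m : ℚ) ^ ((g : ℤ) - p + q)) • y q) := by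
      rw [hyF]
      have hmap : pullB m (finsum y) = ∑ᶠ q, pullB m (y q) := by
        simpa using (pullB m).toAddMonoidHom.map_finsum hyfin
      rw [hmap]
      apply finsum_congr
      intro q
      exact hyspec m q
    have hrhs : ((m : ℚ) ^ c) • F x = finsum (fun q => ((m : ℚ) ^ c) • y q) := by
      rw [hyF]
      exact smul_finsum' _ hyfin
    set w : ℤ → VB := fun q => ((m : ℚ) ^ ((g : ℤ) - p + q)) • y q - ((m : ℚ) ^ c) • y q
      with hw
    have hsub : ∀ q, w q ≠ 0 → y q ≠ 0 := by
      intro q hq hy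
      apply hq
      simp [hw, hy]
    have hwfin : (Function.support w).Finite := by
      apply hyfin.subset
      intro q hq
      exact hsub q hq
    have hfin1 : (Function.support (fun q => ((m : ℚ) ^ ((g : ℤ) - p + q)) • y q)).Finite := by
      apply hyfin.subset
      intro q hq
      simp only [Function.mem_support] at hq ⊢
      intro hy; apply hq; rw [hy, smul_zero]
    have hfin2 : (Function.support (fun q => ((m : ℚ) ^ c) • y q)).Finite := by
      apply hyfin.subset
      intro q hq
      simp only [Function.mem_support] at hq ⊢
      intro hy; apply hq; rw [hy, smul_zero]
    have hwsum : finsum w = 0 := by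
      simp only [hw]
      rw [finsum_sub_distrib hfin1 hfin2, ← hlhs, ← hrhs, h1, sub_self]
    have hwmem : ∀ q, w q ∈ OmB q :=
      fun q => sub_mem (Submodule.smul_mem _ _ (hymem q)) (Submodule.smul_mem _ _ (hymem q))
    have hz := aux_eq_zero_of_finsum_eq_zero hintB hwfin hwmem hwsum
    have hyzero : ∀ q, q ≠ (g : ℤ) - p + s → y q = 0 := by
      intro q hq
      have hzq := hz q
      simp only [hw, sub_eq_zero] at hzq
      by_contra hy
      have hexp := aux_zpow_inj hm (a := (g : ℤ) - p + q) (b := c) (by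
        by_contra habs
        have hsmul := sub_smul ((m : ℚ) ^ ((g : ℤ) - p + q)) ((m : ℚ) ^ c) (y q)
        rw [hzq, sub_self] at hsmul
        exact hy ((smul_eq_zero.mp hsmul).resolve_left (sub_ne_zero.mpr habs)))
      apply hq
      omega
    have hFeq : F x = y ((g : ℤ) - p + s) := by
      rw [hyF]
      exact finsum_eq_single y _ hyzero
    rw [hFeq]
    exact hymem _
  tfae_finish
end

section
/- If f : A → B is a homomorphism of abelian varieties of relative dimension m, then f* maps Ω^p_{Q,s}(B) into Ω^p_{Q,s}(A), and f_* maps Ω^p_{Q,s}(A) into Ω^{p+m}_{Q,s}(B). -/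
/-- **Functoriality of the Beauville eigenspaces.**
`VA`, `VB` model `Ω^*_ℚ(A)` and `Ω^*_ℚ(B)` for a homomorphism `f : A → B` of
abelian varieties of dimensions `gA`, `gB`, of relative dimension
`m = gB - gA`; `fpull = f^*`, `fpush = f_*`, and `pull n`/`push n` are
pullback/pushforward by multiplication by `n`.  The hypotheses are the
gradings of `f^*`, `f_*`, the commutations coming from `f ∘ n = n ∘ f`, and
the characterization of the eigenspaces via pushforwards (equivalence
(3)⇔(4) of the paper).  Then `f^*` maps `Ω^p_{ℚ,s}(B)` into `Ω^p_{ℚ,s}(A)`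
and `f_*` maps `Ω^p_{ℚ,s}(A)` into `Ω^{p+m}_{ℚ,s}(B)`, where
`Ω^p_{ℚ,s} = {x ∈ Ω^p_ℚ : n^* x = n^{2p-s} x for all n}`. -/
theorem beauville_eigenspace_functoriality
    {VA VB : Type*} [AddCommGroup VA] [Module ℚ VA] [AddCommGroup VB] [Module ℚ VB]
    (gA gB : ℕ) (m : ℤ) (hm : m = (gB : ℤ) - gA)
    (OmA : ℤ → Submodule ℚ VA) (OmB : ℤ → Submodule ℚ VB)
    (pullA pushA : ℤ → Module.End ℚ VA) (pullB pushB : ℤ → Module.End ℚ VB)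
    (fpull : VB →ₗ[ℚ] VA) (fpush : VA →ₗ[ℚ] VB)
    -- gradings of f^* and f_*
    (hfpullgrade : ∀ (p : ℤ) (y : VB), y ∈ OmB p → fpull y ∈ OmA p)
    (hfpushgrade : ∀ (p : ℤ) (x : VA), x ∈ OmA p → fpush x ∈ OmB (p + m))
    -- commutation with multiplication by n (from f ∘ n = n ∘ f)
    (hcpull : ∀ (n : ℤ) (y : VB), pullA n (fpull y) = fpull (pullB n y))
    (hcpush : ∀ (n : ℤ) (x : VA), pushB n (fpush x) = fpush (pushA n x))
    -- eigenspace characterization via pushforwards, on A and on B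
    (hEqA : ∀ (p s : ℤ) (x : VA), x ∈ OmA p →
      ((∀ n : ℤ, pullA n x = ((n : ℚ) ^ (2 * p - s)) • x) ↔
        (∀ n : ℤ, pushA n x = ((n : ℚ) ^ (2 * (gA : ℤ) - 2 * p + s)) • x)))
    (hEqB : ∀ (p s : ℤ) (y : VB), y ∈ OmB p →
      ((∀ n : ℤ, pullB n y = ((n : ℚ) ^ (2 * p - s)) • y) ↔
        (∀ n : ℤ, pushB n y = ((n : ℚ) ^ (2 * (gB : ℤ) - 2 * p + s)) • y)))
    (p s : ℤ) :
    (∀ y : VB, y ∈ OmB p →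
      (∀ n : ℤ, pullB n y = ((n : ℚ) ^ (2 * p - s)) • y) →
      fpull y ∈ OmA p ∧
        ∀ n : ℤ, pullA n (fpull y) = ((n : ℚ) ^ (2 * p - s)) • fpull y) ∧
    (∀ x : VA, x ∈ OmA p →
      (∀ n : ℤ, pullA n x = ((n : ℚ) ^ (2 * p - s)) • x) →
      fpush x ∈ OmB (p + m) ∧
        ∀ n : ℤ, pullB n (fpush x) = ((n : ℚ) ^ (2 * (p + m) - s)) • fpush x) := by
  constructor
  · intro y hy hyeig
    have hmem := hfpullgrade p y hy
    refine ⟨hmem, fun n => ?_⟩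
    rw [hcpull, hyeig n, map_smul]
  · intro x hx hxeig
    have hmem := hfpushgrade p x hx
    refine ⟨hmem, fun n => ?_⟩
    have hApush : ∀ n : ℤ, pushA n x = ((n : ℚ) ^ (2 * (gA : ℤ) - 2 * p + s)) • x :=
      (hEqA p s x hx).mp hxeig
    have hBpush : ∀ n : ℤ, pushB n (fpush x)
        = ((n : ℚ) ^ (2 * (gB : ℤ) - 2 * (p + m) + s)) • fpush x := by
      intro n
      rw [hcpush, hApush n, map_smul]
      congr 1
      congr 1
      omega
    exact (hEqB (p + m) s (fpush x) hmem).mpr hBpush n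
end

section
/- Let A be an abelian variety of dimension g over a field of characteristic 0 and let N*_Q(A) ⊂ Ω*_Q(A) be the ideal of numerically trivial cobordism cycles. Then the Fourier–Mukai operator F^Ω maps N*_Q(A) into N*_Q(Â). -/
/-- **The Fourier–Mukai transform preserves numerical triviality.**
`C` models the coefficient ring `Ω^*_ℚ(k)`, and `RA`, `RB`, `RAB` the rings
`Ω^*_ℚ(A)`, `Ω^*_ℚ(Â)`, `Ω^*_ℚ(A×Â)` for an abelian variety `A` with dual
`Â`.  `pullA`, `pullB` are the pullbacks and `pushA`, `pushB` the
pushforwards along the two projections of `A×Â`, `piA`, `piB`, `piAB` the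
pushforwards to the point, and `K` the Fourier–Mukai kernel
`G(c_1^Ω(P)) ∈ Ω^*_ℚ(A×Â)`, with `F^Ω(α) = pushB (pullA α * K)`.
Assuming the projection formulas and functoriality of pushforwards, if `α`
is numerically trivial (`π_*(α·γ) = 0` for all `γ`) then so is `F^Ω(α)`. -/
theorem fourier_mukai_preserves_numerically_trivial
    {C RA RB RAB : Type*}
    [CommRing C] [CommRing RA] [CommRing RB] [CommRing RAB]
    (pullA : RA →+* RAB) (pullB : RB →+* RAB)
    (pushA : RAB →+ RA) (pushB : RAB →+ RB)
    (piA : RA →+ C) (piB : RB →+ C) (piAB : RAB →+ C)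
    (K : RAB)
    -- projection formulas for the two projections of A×Â
    (hprojA : ∀ (x : RA) (z : RAB), pushA (pullA x * z) = x * pushA z)
    (hprojB : ∀ (z : RAB) (y : RB), pushB (z * pullB y) = pushB z * y)
    -- functoriality of pushforwards to the point
    (hpiA : ∀ z : RAB, piA (pushA z) = piAB z)
    (hpiB : ∀ z : RAB, piB (pushB z) = piAB z)
    (α : RA) (hα : ∀ γ : RA, piA (α * γ) = 0) :
    ∀ γ : RB, piB (pushB (pullA α * K) * γ) = 0 := by
  intro γ
  calc piB (pushB (pullA α * K) * γ)
      = piB (pushB (pullA α * K * pullB γ)) := by rw [hprojB]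
    _ = piAB (pullA α * (K * pullB γ)) := by rw [hpiB, mul_assoc]
    _ = piA (pushA (pullA α * (K * pullB γ))) := (hpiA _).symm
    _ = piA (α * pushA (K * pullB γ)) := by rw [hprojA]
    _ = 0 := hα _
end
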